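/- Let (V,α) be a normed vector space over a non-archimedean field ℓ, γ ∈ Γ, and δ ∈ I_ℓ with δ < 1. Then the surjection V^{α≤δγ} → F^{≤δ}(V^{α≤γ}_{\tildeℓ}) induces an isomorphism V^{α≤δγ}/V^{α<δγ} ≅ F^{≤δ}(V^{α≤γ}_{\tildeℓ})/F^{<δ}(V^{α≤γ}_{\tildeℓ}); in particular, its kernel onto F^{≤δ}/F^{<δ} is exactly V^{α<δγ}. -/

import Mathlib

open scoped TensorProduct

section Preamble

variable {ℓ : Type*} [Field ℓ] {Γ₀ : Type*} [LinearOrderedCommGroupWithZero Γ₀]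

/-- The zero element is a bottom element for a linearly ordered commutative group with zero. -/
instance (priority := low) instOrderBotLOCGWZ : OrderBot Γ₀ :=
  { bot := 0, bot_le := fun _ => zero_le' }

/-- A non-archimedean norm on an `ℓ`-vector space `V`, with values in `Γ₀ = Γ ∪ {0}`,
compatible with the non-archimedean absolute value `v` on `ℓ`. -/
structure NAnorm (v : Valuation ℓ Γ₀) (V : Type*) [AddCommGroup V] [Module ℓ V] where
  toFun : V → Γ₀
  eq_zero_iff' : ∀ x : V, toFun x = 0 ↔ x = 0
  smul' : ∀ (c : ℓ) (x : V), toFun (c • x) = v c * toFun x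
  add_le' : ∀ x y : V, toFun (x + y) ≤ max (toFun x) (toFun y)

variable {v : Valuation ℓ Γ₀} {V : Type*} [AddCommGroup V] [Module ℓ V]

/-- A basis `b` splits the norm `α` if `α (∑ cᵢ • bᵢ) = maxᵢ |cᵢ| α(bᵢ)`. -/
def NAnorm.Splits (α : NAnorm v V) {ι : Type*} [Fintype ι] (b : Module.Basis ι ℓ V) : Prop :=
  ∀ c : ι → ℓ, α.toFun (∑ i, c i • b i) = Finset.univ.sup fun i => v (c i) * α.toFun (b i)

/-- A norm is splittable if it admits a splitting basis. -/
def NAnorm.IsSplittable (α : NAnorm v V) : Prop :=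
  ∃ (n : ℕ) (b : Module.Basis (Fin n) ℓ V), α.Splits b

end Preamble


lemma NAnorm.zero_eq {ℓ : Type*} [Field ℓ] {Γ₀ : Type*} [LinearOrderedCommGroupWithZero Γ₀]
    {v : Valuation ℓ Γ₀} {V : Type*} [AddCommGroup V] [Module ℓ V] (α : NAnorm v V) :
    α.toFun 0 = 0 := (α.eq_zero_iff' 0).2 rfl

lemma NAnorm.sum_le {ℓ : Type*} [Field ℓ] {Γ₀ : Type*} [LinearOrderedCommGroupWithZero Γ₀]
    {v : Valuation ℓ Γ₀} {V : Type*} [AddCommGroup V] [Module ℓ V] (α : NAnorm v V)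
    {ι : Type*} (s : Finset ι) (f : ι → V) :
    α.toFun (∑ i ∈ s, f i) ≤ s.sup fun i => α.toFun (f i) := by
  classical
  induction s using Finset.cons_induction with
  | empty =>
    simp only [Finset.sum_empty, Finset.sup_empty, α.zero_eq]
    exact zero_le'
  | cons a t ha ih =>
    rw [Finset.sum_cons, Finset.sup_cons]
    exact le_trans (α.add_le' _ _) (max_le_max le_rfl ih)

lemma mul_lt_mul_right₀' {Γ₀ : Type*} [LinearOrderedCommGroupWithZero Γ₀]
    {a b c : Γ₀} (h : a < b) (hc : c ≠ 0) : a * c < b * c := by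
  rw [mul_comm a, mul_comm b]
  exact mul_lt_mul_of_pos_left h (zero_lt_iff.mpr hc)

/-- for `δ ∈ I_ℓ`, `δ < 1`, the surjection
`V^{α≤δγ} → F^{≤δ}(V^{α≤γ}_{ℓ̃})` induces an isomorphism
`V^{α≤δγ}/V^{α<δγ} ≅ gr^δ = F^{≤δ}/F^{<δ}`; elementwise, `y ∈ V^{α≤δγ}` maps into
`F^{<δ}` (i.e. `y` agrees, modulo `ℓ°°·V^{α≤γ}`, with some `y'` with `α(y') ≤ δ'γ`
for some `δ' < δ`) iff `α(y) < δγ`. -/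
theorem gr_delta_kernel {ℓ : Type*} [Field ℓ] {Γ₀ : Type*}
    [LinearOrderedCommGroupWithZero Γ₀] (v : Valuation ℓ Γ₀)
    (V : Type*) [AddCommGroup V] [Module ℓ V] [FiniteDimensional ℓ V]
    (α : NAnorm v V) (hsp : α.IsSplittable)
    (γ δ : Γ₀) (hγ : γ ≠ 0) (hδ0 : δ ≠ 0) (hδ1 : δ < 1)
    (hin : ∀ x : ℓ, v x < 1 → v x < δ) :
    ∀ y : V, α.toFun y ≤ δ * γ →
      ((∃ δ' : Γ₀, δ' < δ ∧ ∃ y' : V, α.toFun y' ≤ δ' * γ ∧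
          ∃ (n : ℕ) (c : Fin n → ℓ) (z : Fin n → V),
            (∀ i, v (c i) < 1) ∧ (∀ i, α.toFun (z i) ≤ γ) ∧ y - y' = ∑ i, c i • z i)
        ↔ α.toFun y < δ * γ) := by
  intro y hy
  constructor
  · rintro ⟨δ', hδ', y', hy', n, c, z, hc, hz, heq⟩
    have hδγ : (0 : Γ₀) < δ * γ := by
      rw [show (0:Γ₀) = ⊥ from le_antisymm zero_le' bot_le, bot_lt_iff_ne_bot]
      exact fun h => mul_ne_zero hδ0 hγ (h.trans (le_antisymm bot_le zero_le'))
    have hsum : α.toFun (∑ i, c i • z i) < δ * γ := by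
      refine lt_of_le_of_lt (α.sum_le _ _) ?_
      rw [Finset.sup_lt_iff (bot_le.trans_lt hδγ)]
      intro i _
      rw [α.smul' (c i) (z i)]
      calc v (c i) * α.toFun (z i) ≤ v (c i) * γ := mul_le_mul_right (hz i) _
        _ < δ * γ := by
          have := hin _ (hc i)
          exact mul_lt_mul_right₀' this hγ
    have hy'lt : α.toFun y' < δ * γ := by
      refine lt_of_le_of_lt hy' ?_
      exact mul_lt_mul_right₀' hδ' hγ
    have : y = y' + (y - y') := by abel
    rw [this, heq]
    exact lt_of_le_of_lt (α.add_le' _ _) (max_lt hy'lt hsum)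
  · intro h
    refine ⟨α.toFun y * γ⁻¹, ?_, y, ?_, 0, Fin.elim0, Fin.elim0, ?_, ?_, ?_⟩
    · have : α.toFun y * γ⁻¹ < (δ * γ) * γ⁻¹ := by
        exact mul_lt_mul_right₀' h (inv_ne_zero hγ)
      rwa [mul_assoc, mul_inv_cancel₀ hγ, mul_one] at this
    · rw [mul_assoc, inv_mul_cancel₀ hγ, mul_one]
    · exact fun i => i.elim0
    · exact fun i => i.elim0
    · simp
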